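/- arXiv:2005.13242 — 3 statements merged into one kernel-verified Lean document; each statement's English description precedes it below -/
import Mathlib

section
/- If W is a resolving set of the Petersen graph with |W| = 3 (i.e., a metric basis), then no two vertices of W are adjacent; that is, W is an independent set of the Petersen graph. -/
open SimpleGraph

/-- `W` is a resolving set of `G`: every pair of distinct vertices is
distinguished by its distance to some vertex of `W`. -/
def IsResolving {V : Type*} (G : SimpleGraph V) (W : Set V) : Prop :=
  ∀ x y : V, x ≠ y → ∃ z ∈ W, G.dist x z ≠ G.dist y z

/-- Vertices of the Petersen graph: `Sum.inl i` is the outer vertex `u_{i+1}` and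
`Sum.inr i` is the inner vertex `w_{i+1}` (0-based indexing of the paper's labels). -/
abbrev PetersenVert := Fin 5 ⊕ Fin 5

/-- The relation generating the edges of the Petersen graph:
`u_i u_{i+1}`, `u_i w_i` and `w_i w_{i+2}`, indices modulo 5. -/
def petersenRel : PetersenVert → PetersenVert → Prop
  | Sum.inl i, Sum.inl j => j = i + 1
  | Sum.inl i, Sum.inr j => i = j
  | Sum.inr i, Sum.inr j => j = i + 2
  | _, _ => False

/-- The Petersen graph. -/
def petersen : SimpleGraph PetersenVert := SimpleGraph.fromRel petersenRel

instance : DecidableRel petersenRel := fun a b => by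
  cases a <;> cases b <;> unfold petersenRel <;> infer_instance

instance : DecidableRel petersen.Adj := fun a b => by
  unfold petersen
  exact inferInstanceAs (Decidable (a ≠ b ∧ (petersenRel a b ∨ petersenRel b a)))

/-- Combinatorial distance function on the Petersen graph. -/
def f (x y : PetersenVert) : ℕ := if x = y then 0 else if petersen.Adj x y then 1 else 2

lemma common : ∀ x y : PetersenVert, x ≠ y → ¬ petersen.Adj x y →
    ∃ z, petersen.Adj x z ∧ petersen.Adj z y := by decide

lemma dist_eq (x y : PetersenVert) : petersen.dist x y = f x y := by
  unfold f
  split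
  · subst x; simp
  · next hne =>
    split
    · next hadj => exact SimpleGraph.dist_eq_one_iff_adj.mpr hadj
    · next hnadj =>
      obtain ⟨z, h1, h2⟩ := common x y hne hnadj
      have hle : petersen.dist x y ≤ 2 := by
        have hle' := SimpleGraph.dist_le (h1.toWalk.append h2.toWalk)
        simpa using hle'
      have hr : petersen.Reachable x y := ⟨h1.toWalk.append h2.toWalk⟩
      have h0 : petersen.dist x y ≠ 0 := by
        simp [SimpleGraph.dist_eq_zero_iff_eq_or_not_reachable, hne, hr]
      have h1' : petersen.dist x y ≠ 1 := by
        intro h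
        exact hnadj ((SimpleGraph.dist_eq_one_iff_adj).mp h)
      omega

lemma key : ∀ a b c : PetersenVert,
    (∀ x y : PetersenVert, x ≠ y → f x a ≠ f y a ∨ f x b ≠ f y b ∨ f x c ≠ f y c) →
    ¬ petersen.Adj a b ∧ ¬ petersen.Adj a c ∧ ¬ petersen.Adj b c := by decide

/-- Every metric basis of the Petersen graph (a resolving set of cardinality 3)
is an independent set. -/
theorem basis_petersen_independent (W : Set PetersenVert)
    (hW : IsResolving petersen W) (hcard : W.ncard = 3) :
    ∀ x ∈ W, ∀ y ∈ W, ¬ petersen.Adj x y := by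
  obtain ⟨a, b, c, hab, hac, hbc, rfl⟩ := Set.ncard_eq_three.mp hcard
  have hres : ∀ x y : PetersenVert, x ≠ y →
      f x a ≠ f y a ∨ f x b ≠ f y b ∨ f x c ≠ f y c := by
    intro x y hxy
    obtain ⟨z, hz, hd⟩ := hW x y hxy
    rw [dist_eq, dist_eq] at hd
    rcases hz with rfl | rfl | rfl
    · exact Or.inl hd
    · exact Or.inr (Or.inl hd)
    · exact Or.inr (Or.inr hd)
  obtain ⟨h1, h2, h3⟩ := key a b c hres
  intro x hx y hy
  rcases hx with rfl | rfl | rfl <;> rcases hy with rfl | rfl | rfl <;>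
    simp_all [SimpleGraph.adj_comm, SimpleGraph.irrefl]
end

section
/- For all integers s, t ≥ 3, the metric dimension of the torus grid graph C_s □ C_t equals 3 if s or t is odd, and equals 4 if both s and t are even. -/
open SimpleGraph

/-- The metric dimension of `G`: the minimum cardinality of a resolving set. -/
noncomputable def metricDim {V : Type*} (G : SimpleGraph V) : ℕ :=
  sInf {n | ∃ W : Set V, W.ncard = n ∧ IsResolving G W}

/-!
Distances in `C_s □ C_t` are sums of cyclic distances `|x - x'|_s + |y - y'|_t`.

Upper bounds. For `s = 2k + 1` the landmarks `(0,0)`, `(k,0)` determine `x`, because on an odd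
cycle `x ↦ |x|_s - |x - k|_s` is injective; then `(0,1)` determines `y`. For `s = 2k` we have
`|x|_s + |x - k|_s = k`, so `(0,0)`, `(k,0)` give `|x|_s` and `|y|_t`, and `(0,1)`, `(1,1)` add
`|y - 1|_t` and `|x - 1|_s`.

Lower bound 3. Along an edge the distance to a fixed vertex changes by at most one, so two of the
four neighbours of a landmark `u` are equidistant from any second landmark.

Lower bound 4 when `s` and `t` are even. The torus is then bipartite, so a step changes the
distance to a landmark by exactly `±1`; these four signs (the profile of the landmark seen from a
centre `c`) determine the distances from the `3 × 3` box around `c`. A finite check shows that two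
landmarks separate all pairs of that box at equal distance from `c` only if, seen from `c`, they
lie in open quadrants sharing a side. Taking each of three landmarks as the centre in turn gives
three parity conditions that cannot hold together.
-/

open Set

namespace SimpleGraph

variable {V V' : Type*} {G : SimpleGraph V} {H : SimpleGraph V'}

theorem Preconnected.le_dist_add_of_forall_adj (hG : G.Preconnected) {f : V → ℕ}
    (hf : ∀ x y, G.Adj x y → f x ≤ f y + 1) (u v : V) : f u ≤ G.dist u v + f v := by
  obtain ⟨p, hp⟩ := (hG u v).exists_walk_length_eq_dist
  rw [← hp]
  clear hp
  induction p with
  | nil => simp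
  | cons h p ih => have := hf _ _ h; rw [Walk.length_cons]; omega

theorem dist_le_of_forall_exists_adj_lt {f : V → ℕ} {v : V}
    (hf : ∀ x ≠ v, ∃ y, G.Adj x y ∧ f y < f x) (u : V) : G.dist u v ≤ f u := by
  suffices ∃ p : G.Walk u v, p.length ≤ f u from
    let ⟨p, hp⟩ := this; (dist_le p).trans hp
  induction hk : f u using Nat.strong_induction_on generalizing u with
  | _ k ih =>
    by_cases huv : u = v
    · subst huv; exact ⟨Walk.nil, Nat.zero_le _⟩
    obtain ⟨y, hadj, hy⟩ := hf u huv
    obtain ⟨p, hp⟩ := ih _ (hk ▸ hy) y rfl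
    exact ⟨Walk.cons hadj p, by rw [Walk.length_cons]; omega⟩

theorem Preconnected.dist_boxProd (hG : G.Preconnected) (hH : H.Preconnected) (x y : V × V') :
    (G □ H).dist x y = G.dist x.1 y.1 + H.dist x.2 y.2 := by
  have := ((hG.boxProd hH) x y).coe_dist_eq_edist
  rw [edist_boxProd, ← (hG x.1 y.1).coe_dist_eq_edist, ← (hH x.2 y.2).coe_dist_eq_edist] at this
  exact_mod_cast this

theorem exists_ne_dist_eq_of_three_lt_degree [G.LocallyFinite] {u : V} (hu : 3 < G.degree u)
    (w : V) : ∃ x ∈ G.neighborFinset u, ∃ y ∈ G.neighborFinset u, x ≠ y ∧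
      G.dist x w = G.dist y w := by
  refine Finset.exists_ne_map_eq_of_card_lt_of_maps_to
    (t := Finset.Icc (G.dist u w - 1) (G.dist u w + 1))
    (by rw [Nat.card_Icc, card_neighborFinset_eq_degree]; omega) fun x hx ↦ ?_
  have := ((G.mem_neighborFinset u x).mp hx).diff_dist_adj (u := w)
  rw [dist_comm (u := w), dist_comm (u := w)] at this
  rw [Finset.coe_Icc, mem_Icc]
  omega

end SimpleGraph

section Resolving

variable {V V' : Type*} {G : SimpleGraph V} {H : SimpleGraph V'}

theorem IsResolving.mono {W W' : Set V} (hW : IsResolving G W) (h : W ⊆ W') :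
    IsResolving G W' := fun x y hxy ↦
  let ⟨z, hz, hne⟩ := hW x y hxy
  ⟨z, h hz, hne⟩

theorem isResolving_range_iff {ι : Type*} {g : ι → V} :
    IsResolving G (range g) ↔ ∀ x y, (∀ i, G.dist x (g i) = G.dist y (g i)) → x = y := by
  simp only [IsResolving, exists_range_iff, not_imp_comm (a := _ = _), not_exists, not_not]

theorem Set.Finite.exists_subset_range_fin {α : Type*} [Nonempty α] {s : Set α}
    (hs : s.Finite) {k : ℕ} (hk : s.ncard ≤ k) : ∃ g : Fin k → α, s ⊆ range g := by
  obtain ⟨n, f, hf, rfl⟩ := hs.fin_param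
  rw [ncard_range_of_injective hf, Nat.card_eq_fintype_card, Fintype.card_fin] at hk
  refine ⟨fun i ↦ if h : i.val < n then f ⟨i, h⟩ else Classical.arbitrary α, ?_⟩
  rintro _ ⟨i, rfl⟩
  exact ⟨Fin.castLE hk i, by simp⟩

theorem lt_ncard_of_isResolving [Finite V] [Nonempty V] {k : ℕ}
    (hk : ∀ g : Fin k → V, ¬IsResolving G (range g)) {W : Set V} (hW : IsResolving G W) :
    k < W.ncard := by
  by_contra! h
  obtain ⟨g, hg⟩ := W.toFinite.exists_subset_range_fin h
  exact hk g (hW.mono hg)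

theorem metricDim_eq_succ [Finite V] [Nonempty V] {k : ℕ} (f : Fin (k + 1) → V)
    (hf : IsResolving G (range f)) (hk : ∀ g : Fin k → V, ¬IsResolving G (range g)) :
    metricDim G = k + 1 := by
  have hcard : (range f).ncard = k + 1 :=
    le_antisymm (by simpa [← image_univ] using ncard_image_le (s := univ) (f := f) (toFinite _))
      (lt_ncard_of_isResolving hk hf)
  refine le_antisymm (Nat.sInf_le ⟨_, hcard, hf⟩) (le_csInf ⟨_, _, hcard, hf⟩ ?_)
  rintro _ ⟨W, rfl, hW⟩
  exact lt_ncard_of_isResolving hk hW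

theorem not_isResolving_range_fin_two [G.LocallyFinite] (hdeg : ∀ u, 3 < G.degree u)
    (g : Fin 2 → V) : ¬IsResolving G (range g) := by
  obtain ⟨x, hx, y, hy, hxy, hdist⟩ := exists_ne_dist_eq_of_three_lt_degree (hdeg (g 0)) (g 1)
  rw [mem_neighborFinset] at hx hy
  rw [isResolving_range_iff]
  refine fun h ↦ hxy (h x y (Fin.forall_fin_two.mpr ⟨?_, hdist⟩))
  rw [dist_comm, dist_eq_one_iff_adj.mpr hx, dist_comm, dist_eq_one_iff_adj.mpr hy]

theorem IsResolving.boxProd_swap (hG : G.Preconnected) (hH : H.Preconnected) {W : Set (V × V')}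
    (h : IsResolving (G □ H) W) : IsResolving (H □ G) (Prod.swap '' W) := by
  intro x y hxy
  obtain ⟨z, hz, hne⟩ := h x.swap y.swap (Prod.swap_injective.ne hxy)
  refine ⟨z.swap, mem_image_of_mem _ hz, ?_⟩
  rw [hG.dist_boxProd hH, hG.dist_boxProd hH] at hne
  rw [hH.dist_boxProd hG, hH.dist_boxProd hG]
  simpa [add_comm] using hne

end Resolving

/-- Distance between the residues `a, b < n` on the cycle `ℤ/n` (junk for larger arguments). -/
def cycDist (n a b : ℕ) : ℕ := min (a.dist b) (n - a.dist b)

section CycDist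

variable {n k a b c : ℕ}

theorem cycDist_self : cycDist n a a = 0 := by simp [cycDist]

theorem cycDist_le_add_one_of_cycDist_eq_one (ha : a < n) (hb : b < n) (hc : c < n)
    (hab : cycDist n a b = 1) : cycDist n a c ≤ cycDist n b c + 1 := by
  simp only [cycDist, Nat.dist] at *; omega

theorem exists_cycDist_eq_one_lt (ha : a < n) (hc : c < n) (hac : a ≠ c) :
    ∃ b < n, cycDist n a b = 1 ∧ cycDist n b c < cycDist n a c := by
  simp only [cycDist, Nat.dist]
  rcases Nat.lt_or_gt_of_ne hac with h | h
  · by_cases hfwd : 2 * (c - a) ≤ n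
    · exact ⟨a + 1, by omega, by omega, by omega⟩
    · by_cases ha0 : a = 0
      · exact ⟨n - 1, by omega, by omega, by omega⟩
      · exact ⟨a - 1, by omega, by omega, by omega⟩
  · by_cases hbwd : 2 * (a - c) ≤ n
    · exact ⟨a - 1, by omega, by omega, by omega⟩
    · by_cases ha1 : a + 1 = n
      · exact ⟨0, by omega, by omega, by omega⟩
      · exact ⟨a + 1, by omega, by omega, by omega⟩

theorem cycDist_eq_add_one_or_of_even (hn : Even n) (ha : a < n) (hb : b < n) (hc : c < n)
    (hab : cycDist n a b = 1) :
    cycDist n b c = cycDist n a c + 1 ∨ cycDist n a c = cycDist n b c + 1 := by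
  obtain ⟨m, rfl⟩ := hn
  simp only [cycDist, Nat.dist] at *; omega

theorem eq_of_cycDist_zero_of_cycDist_one (hn : 3 ≤ n) (ha : a < n) (hb : b < n)
    (h₀ : cycDist n a 0 = cycDist n b 0) (h₁ : cycDist n a 1 = cycDist n b 1) : a = b := by
  simp only [cycDist, Nat.dist] at *; omega

theorem eq_of_cycDist_sub_cycDist_half (hn : n = 2 * k + 1) (ha : a < n) (hb : b < n)
    (h : cycDist n a 0 + cycDist n b k = cycDist n b 0 + cycDist n a k) : a = b := by
  simp only [cycDist, Nat.dist] at *; omega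

theorem cycDist_add_cycDist_half (hn : n = 2 * k) (ha : a < n) :
    cycDist n a 0 + cycDist n a k = k := by
  simp only [cycDist, Nat.dist] at *; omega

end CycDist

section CycleGraph

variable {n : ℕ}

theorem cycleGraph_adj_iff_cycDist (x y : Fin n) :
    (cycleGraph n).Adj x y ↔ cycDist n x y = 1 := by
  have hxy := Fin.coe_int_sub_eq_ite x y
  have hyx := Fin.coe_int_sub_eq_ite y x
  rw [cycleGraph_adj', cycDist, Nat.dist]
  split_ifs at hxy hyx <;> simp only [Fin.le_iff_val_le_val] at * <;> omega

theorem cycleGraph_dist (x y : Fin n) : (cycleGraph n).dist x y = cycDist n x y := by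
  apply le_antisymm
  · refine dist_le_of_forall_exists_adj_lt (f := fun u : Fin n ↦ cycDist n u y)
      (fun u hu ↦ ?_) x
    obtain ⟨b, hb, hub, hby⟩ := exists_cycDist_eq_one_lt u.isLt y.isLt (Fin.val_ne_of_ne hu)
    exact ⟨⟨b, hb⟩, (cycleGraph_adj_iff_cycDist _ _).mpr hub, hby⟩
  · simpa [cycDist_self] using cycleGraph_preconnected.le_dist_add_of_forall_adj
      (f := fun u : Fin n ↦ cycDist n u y) (fun u v huv ↦ cycDist_le_add_one_of_cycDist_eq_one
        u.isLt v.isLt y.isLt ((cycleGraph_adj_iff_cycDist u v).mp huv)) x y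

theorem cycleGraph_dist_add_right (x y k : Fin n) :
    (cycleGraph n).dist (x + k) (y + k) = (cycleGraph n).dist x y := by
  have := x.isLt; have := y.isLt; have := k.isLt
  simp only [cycleGraph_dist, Fin.val_add_eq_ite, cycDist, Nat.dist]
  split_ifs <;> omega

theorem cycleGraph_dist_of_adj_of_even (hn : Even n) {x y : Fin n} (hxy : (cycleGraph n).Adj x y)
    (w : Fin n) : ((cycleGraph n).dist y w : ℤ) = (cycleGraph n).dist x w +
      if (cycleGraph n).dist x w < (cycleGraph n).dist y w then 1 else -1 := by
  rw [cycleGraph_adj_iff_cycDist] at hxy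
  rw [cycleGraph_dist, cycleGraph_dist]
  rcases cycDist_eq_add_one_or_of_even hn x.isLt y.isLt w.isLt hxy with h | h <;> rw [h] <;> simp

theorem cycleGraph_adj_add_one [NeZero n] (hn : 2 ≤ n) (c : Fin n) :
    (cycleGraph n).Adj c (c + 1) := by
  rw [cycleGraph_adj', add_sub_cancel_left, Fin.val_one', Nat.one_mod_eq_one]
  omega

end CycleGraph

section Torus

variable {s t : ℕ}

theorem torus_dist (u w : Fin s × Fin t) :
    (cycleGraph s □ cycleGraph t).dist u w = cycDist s u.1 w.1 + cycDist t u.2 w.2 := by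
  rw [cycleGraph_preconnected.dist_boxProd cycleGraph_preconnected, cycleGraph_dist,
    cycleGraph_dist]

theorem torus_degree (hs : 3 ≤ s) (ht : 3 ≤ t) (u : Fin s × Fin t) :
    (cycleGraph s □ cycleGraph t).degree u = 4 := by
  obtain ⟨s, rfl⟩ := Nat.exists_eq_add_of_le' hs
  obtain ⟨t, rfl⟩ := Nat.exists_eq_add_of_le' ht
  rw [degree_boxProd, cycleGraph_degree_three_le, cycleGraph_degree_three_le]

theorem isResolving_torus_of_odd {k : ℕ} (ht : 3 ≤ t) :
    IsResolving (cycleGraph (2 * k + 1) □ cycleGraph t)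
      (range ![(0, ⟨0, by omega⟩), (⟨k, by omega⟩, ⟨0, by omega⟩),
        (0, ⟨1, by omega⟩)]) := by
  rw [isResolving_range_iff]
  intro x y h
  have h₀ := h 0
  have h₁ := h 1
  have h₂ := h 2
  simp only [torus_dist, Matrix.cons_val, Fin.val_zero] at h₀ h₁ h₂
  have hx : x.1 = y.1 := Fin.ext (eq_of_cycDist_sub_cycDist_half rfl x.1.isLt y.1.isLt (by omega))
  rw [hx] at h₀ h₂
  exact Prod.ext hx
    (Fin.ext (eq_of_cycDist_zero_of_cycDist_one ht x.2.isLt y.2.isLt (by omega) (by omega)))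

theorem isResolving_torus_of_even {k : ℕ} (hk : 2 ≤ k) (ht : 3 ≤ t) :
    IsResolving (cycleGraph (2 * k) □ cycleGraph t)
      (range ![(⟨0, by omega⟩, ⟨0, by omega⟩), (⟨k, by omega⟩, ⟨0, by omega⟩),
        (⟨0, by omega⟩, ⟨1, by omega⟩), (⟨1, by omega⟩, ⟨1, by omega⟩)]) := by
  rw [isResolving_range_iff]
  intro x y h
  have h₀ := h 0
  have h₁ := h 1
  have h₂ := h 2
  have h₃ := h 3
  simp only [torus_dist, Matrix.cons_val] at h₀ h₁ h₂ h₃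
  have hx := cycDist_add_cycDist_half rfl x.1.isLt
  have hy := cycDist_add_cycDist_half rfl y.1.isLt
  exact Prod.ext
    (Fin.ext (eq_of_cycDist_zero_of_cycDist_one (by omega) x.1.isLt y.1.isLt (by omega) (by omega)))
    (Fin.ext (eq_of_cycDist_zero_of_cycDist_one ht x.2.isLt y.2.isLt (by omega) (by omega)))

end Torus

/-- How a landmark is seen from a centre of the torus: for each coordinate, whether a step `+1`,
resp. `-1`, from the centre increases the distance to the landmark (see `cycleProfile`). -/
abbrev TorusProfile := (Bool × Bool) × (Bool × Bool)

def stepChange (p : Bool × Bool) : SignType → ℤ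
  | .zero => 0
  | .pos => if p.1 then 1 else -1
  | .neg => if p.2 then 1 else -1

def TorusProfile.change (p : TorusProfile) (z : SignType × SignType) : ℤ :=
  stepChange p.1 z.1 + stepChange p.2 z.2

def TorusProfile.swap (p : TorusProfile) : TorusProfile := (p.1.swap, p.2.swap)

/-- `((true, true), (true, true))` is the profile of the centre seen from itself. -/
def SeparatesBox (p q : TorusProfile) : Prop :=
  ∀ z z' : SignType × SignType, z ≠ z' →
    TorusProfile.change ((true, true), (true, true)) z =
      TorusProfile.change ((true, true), (true, true)) z' →
    p.change z ≠ p.change z' ∨ q.change z ≠ q.change z'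

/-- Neither landmark shares a row or column with the centre or its antipode, so each lies in an open
quadrant around the centre (`p.1.1` and `p.2.1` say which), and the two quadrants share a side. -/
def AdjacentQuadrants (p q : TorusProfile) : Prop :=
  p.1.1 ≠ p.1.2 ∧ p.2.1 ≠ p.2.2 ∧ q.1.1 ≠ q.1.2 ∧ q.2.1 ≠ q.2.2 ∧
    (p.1.1 ^^ q.1.1) ≠ (p.2.1 ^^ q.2.1)

theorem SeparatesBox.adjacentQuadrants {p q : TorusProfile} (h : SeparatesBox p q) :
    AdjacentQuadrants p q := by
  revert p q
  unfold SeparatesBox TorusProfile.change stepChange AdjacentQuadrants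
  decide

set_option synthInstance.maxSize 1024 in
/-- With `δ p := p.1.1 ^^ p.2.1`, which a swap of a profile in open quadrants leaves unchanged, the
three conditions say that `δ a`, `δ b`, `δ c` are pairwise distinct Booleans. -/
theorem not_adjacentQuadrants_cyclic (a b c : TorusProfile) :
    ¬(AdjacentQuadrants a b ∧ AdjacentQuadrants a.swap c ∧
      AdjacentQuadrants b.swap c.swap) := by
  obtain ⟨⟨a₁, a₂⟩, a₃, a₄⟩ := a
  obtain ⟨⟨b₁, b₂⟩, b₃, b₄⟩ := b
  obtain ⟨⟨c₁, c₂⟩, c₃, c₄⟩ := c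
  simp only [AdjacentQuadrants, TorusProfile.swap, Prod.swap_prod_mk]
  decide +revert

section Profile

variable {n : ℕ} [NeZero n]

noncomputable def cycleProfile (c w : Fin n) : Bool × Bool :=
  (decide ((cycleGraph n).dist c w < (cycleGraph n).dist (c + 1) w),
    decide ((cycleGraph n).dist c w < (cycleGraph n).dist (c - 1) w))

theorem cycleProfile_swap (c w : Fin n) : cycleProfile w c = (cycleProfile c w).swap := by
  have h₁ := cycleGraph_dist_add_right w (c - 1) 1
  have h₂ := cycleGraph_dist_add_right (w - 1) c 1
  rw [sub_add_cancel] at h₁ h₂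
  simp only [cycleProfile, Prod.swap_prod_mk, dist_comm (v := w), ← h₁, h₂]

theorem cycleProfile_self (hn : 2 ≤ n) (c : Fin n) : cycleProfile c c = (true, true) := by
  have h₁ := cycleGraph_adj_add_one hn c
  have h₂ := cycleGraph_adj_add_one hn (c - 1)
  rw [sub_add_cancel] at h₂
  simp [cycleProfile, dist_eq_one_iff_adj.mpr h₁.symm, dist_eq_one_iff_adj.mpr h₂]

theorem cycleGraph_dist_add_signType (hn : Even n) (c w : Fin n) (a : SignType) :
    ((cycleGraph n).dist (c + a) w : ℤ) =
      (cycleGraph n).dist c w + stepChange (cycleProfile c w) a := by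
  have hn2 : 2 ≤ n := by obtain ⟨m, rfl⟩ := hn; have := NeZero.ne (m + m); omega
  have h₁ := cycleGraph_adj_add_one hn2 (c - 1)
  rw [sub_add_cancel] at h₁
  cases a
  · simp [stepChange]
  · rw [SignType.neg_eq_neg_one, SignType.coe_neg_one, ← sub_eq_add_neg,
      cycleGraph_dist_of_adj_of_even hn h₁.symm]
    simp [stepChange, cycleProfile]
  · rw [SignType.pos_eq_one, SignType.coe_one,
      cycleGraph_dist_of_adj_of_even hn (cycleGraph_adj_add_one hn2 c)]
    simp [stepChange, cycleProfile]

theorem signType_cast_injective (hn : 3 ≤ n) :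
    Function.Injective (SignType.cast : SignType → Fin n) := by
  have h₁ : ((1 : Fin n) : ℕ) = 1 := by rw [Fin.val_one', Nat.one_mod_eq_one]; omega
  have h₂ : ((-1 : Fin n) : ℕ) = n - 1 := by rw [Fin.val_neg', h₁, Nat.mod_eq_of_lt]; omega
  intro a b h
  have := congrArg Fin.val h
  cases a <;> cases b <;>
    first | rfl | (simp only [SignType.cast, Fin.val_zero, h₁, h₂] at this; omega)

end Profile

section TorusProfile

variable {s t : ℕ} [NeZero s] [NeZero t]

noncomputable def torusProfile (c w : Fin s × Fin t) : TorusProfile :=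
  (cycleProfile c.1 w.1, cycleProfile c.2 w.2)

theorem torusProfile_swap (c w : Fin s × Fin t) : torusProfile w c = (torusProfile c w).swap := by
  simp only [torusProfile, TorusProfile.swap, cycleProfile_swap c.1, cycleProfile_swap c.2]

theorem torus_dist_add_signType (hs : Even s) (ht : Even t) (c w : Fin s × Fin t)
    (z : SignType × SignType) :
    ((cycleGraph s □ cycleGraph t).dist (c.1 + z.1, c.2 + z.2) w : ℤ) =
      (cycleGraph s □ cycleGraph t).dist c w + (torusProfile c w).change z := by
  rw [cycleGraph_preconnected.dist_boxProd cycleGraph_preconnected,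
    cycleGraph_preconnected.dist_boxProd cycleGraph_preconnected]
  push_cast
  rw [cycleGraph_dist_add_signType hs, cycleGraph_dist_add_signType ht]
  simp only [TorusProfile.change, torusProfile]
  ring

theorem not_isResolving_of_not_separatesBox (hs : Even s) (ht : Even t) (hs3 : 3 ≤ s)
    (ht3 : 3 ≤ t) {c u v : Fin s × Fin t}
    (h : ¬SeparatesBox (torusProfile c u) (torusProfile c v)) {W : Set (Fin s × Fin t)}
    (hW : W ⊆ {c, u, v}) : ¬IsResolving (cycleGraph s □ cycleGraph t) W := by
  simp only [SeparatesBox, not_forall, not_or, not_not] at h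
  obtain ⟨z, z', hne, hc, hu, hv⟩ := h
  have hdist : ∀ w, (torusProfile c w).change z = (torusProfile c w).change z' →
      (cycleGraph s □ cycleGraph t).dist (c.1 + z.1, c.2 + z.2) w =
        (cycleGraph s □ cycleGraph t).dist (c.1 + z'.1, c.2 + z'.2) w := fun w hw ↦ by
    have := torus_dist_add_signType hs ht c w z
    have := torus_dist_add_signType hs ht c w z'
    omega
  have hc' : (torusProfile c c).change z = (torusProfile c c).change z' := by
    rwa [torusProfile, cycleProfile_self (by omega), cycleProfile_self (by omega)]
  intro hres
  obtain ⟨w, hw, hne'⟩ := hres (c.1 + z.1, c.2 + z.2) (c.1 + z'.1, c.2 + z'.2) (by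
    simpa only [ne_eq, Prod.ext_iff, add_right_inj, (signType_cast_injective hs3).eq_iff,
      (signType_cast_injective ht3).eq_iff] using hne)
  rcases hW hw with rfl | rfl | rfl
  exacts [hne' (hdist _ hc'), hne' (hdist _ hu), hne' (hdist _ hv)]

theorem not_isResolving_range_fin_three (hs : Even s) (ht : Even t) (hs3 : 3 ≤ s) (ht3 : 3 ≤ t)
    (g : Fin 3 → Fin s × Fin t) : ¬IsResolving (cycleGraph s □ cycleGraph t) (range g) := by
  intro hres
  have hsep : ∀ c u v, range g ⊆ {c, u, v} →
      SeparatesBox (torusProfile c u) (torusProfile c v) :=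
    fun c u v hg ↦ by_contra fun h ↦ not_isResolving_of_not_separatesBox hs ht hs3 ht3 h hg hres
  refine not_adjacentQuadrants_cyclic (torusProfile (g 0) (g 1)) (torusProfile (g 0) (g 2))
    (torusProfile (g 1) (g 2)) ⟨?_, ?_, ?_⟩
  · exact (hsep _ _ _ (range_subset_iff.mpr fun i ↦ by fin_cases i <;> simp)).adjacentQuadrants
  · rw [← torusProfile_swap]
    exact (hsep _ _ _ (range_subset_iff.mpr fun i ↦ by fin_cases i <;> simp)).adjacentQuadrants
  · rw [← torusProfile_swap, ← torusProfile_swap]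
    exact (hsep _ _ _ (range_subset_iff.mpr fun i ↦ by fin_cases i <;> simp)).adjacentQuadrants

end TorusProfile

/-- For `s, t ≥ 3`, the torus grid `C_s □ C_t` has metric dimension 3 if `s` or `t`
is odd, and metric dimension 4 if both `s` and `t` are even. -/
theorem metricDim_torus (s t : ℕ) (hs : 3 ≤ s) (ht : 3 ≤ t) :
    ((Odd s ∨ Odd t) → metricDim (cycleGraph s □ cycleGraph t) = 3) ∧
    (Even s → Even t → metricDim (cycleGraph s □ cycleGraph t) = 4) := by
  have : NeZero s := ⟨by omega⟩
  have : NeZero t := ⟨by omega⟩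
  have h₂ : ∀ g : Fin 2 → Fin s × Fin t,
      ¬IsResolving (cycleGraph s □ cycleGraph t) (range g) :=
    not_isResolving_range_fin_two fun u ↦ by rw [torus_degree hs ht]; norm_num
  refine ⟨?_, fun hse hte ↦ ?_⟩
  · rintro (⟨k, rfl⟩ | ⟨k, rfl⟩)
    · exact metricDim_eq_succ _ (isResolving_torus_of_odd ht) h₂
    · have h := (isResolving_torus_of_odd (k := k) hs).boxProd_swap cycleGraph_preconnected
        cycleGraph_preconnected
      rw [← range_comp] at h
      exact metricDim_eq_succ _ h h₂
  · obtain ⟨k, rfl⟩ := even_iff_two_dvd.mp hse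
    exact metricDim_eq_succ _ (isResolving_torus_of_even (by omega) ht)
      (not_isResolving_range_fin_three hse hte hs ht)
end

section
/- Let G = K_{a_1,…,a_k} be the complete multipartite graph with k ≥ 2 parts of sizes a_1,…,a_k, let n = a_1 + ⋯ + a_k, and let s be the number of parts of size 1. Then dim(G) = n − k if s = 0, and dim(G) = n + s − k − 1 if s ≥ 1. -/
/-!
Distances in a complete multipartite graph are 1 between parts and 2 inside a part, so a vertex
`z` separates `x ≠ y` only if `z ∈ {x, y}` or `z` lies in the part of exactly one of them. Hence
`W` is resolving iff its complement meets every part at most once and meets at most one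
singleton part. The largest such complement takes one vertex from each part of size at least 2
and one singleton vertex if there is one.
-/

open SimpleGraph

lemma IsResolving.metricDim_eq_ncard {V : Type*} {G : SimpleGraph V} {W₀ : Set V}
    (h₀ : IsResolving G W₀) (hmin : ∀ W, IsResolving G W → W₀.ncard ≤ W.ncard) :
    metricDim G = W₀.ncard :=
  IsLeast.csInf_eq ⟨⟨W₀, rfl, h₀⟩, by rintro _ ⟨W, rfl, hW⟩; exact hmin W hW⟩

namespace Set

variable {α : Type*} [Finite α] {I S : Set α}

lemma ncard_le_of_inter_subsingleton (h : (I ∩ S).Subsingleton) :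
    I.ncard ≤ Sᶜ.ncard + min 1 S.ncard := by
  have hS : (I ∩ S).ncard ≤ 1 := ncard_le_one_iff_subsingleton.mpr h
  have hS' : (I ∩ S).ncard ≤ S.ncard := ncard_le_ncard inter_subset_right
  have hSc : (I \ S).ncard ≤ Sᶜ.ncard := ncard_le_ncard (sdiff_subset_compl I S)
  rw [← ncard_inter_add_ncard_sdiff_eq_ncard I S]
  omega

lemma exists_inter_subsingleton_ncard_eq (S : Set α) :
    ∃ I : Set α, (I ∩ S).Subsingleton ∧ I.ncard = Sᶜ.ncard + min 1 S.ncard := by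
  obtain ⟨T, hTS, hT⟩ := exists_subset_card_eq (min_le_right 1 S.ncard)
  refine ⟨Sᶜ ∪ T, ?_, ?_⟩
  · rw [union_inter_distrib_right, compl_inter_self, empty_union]
    exact ncard_le_one_iff_subsingleton.mp (hT ▸ min_le_left _ _) |>.anti inter_subset_left
  · rw [ncard_union_eq (disjoint_compl_left.mono_right hTS), hT]

end Set

lemma Sigma.fst_ne_of_ne_of_subsingleton {ι : Type*} {V : ι → Type*} {x z : Σ i, V i}
    (hxz : x ≠ z) (hx : Subsingleton (V x.1)) : x.1 ≠ z.1 :=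
  fun h => hxz (Sigma.ext h (Subsingleton.helim (congrArg V h) _ _))

namespace completeMultipartiteGraph

variable {ι : Type*} {V : ι → Type*}

lemma dist_eq [Nontrivial ι] [∀ i, Nonempty (V i)] [DecidableEq (Σ i, V i)]
    [DecidableEq ι] (x y : Σ i, V i) :
    (completeMultipartiteGraph V).dist x y = if x = y then 0 else if x.1 = y.1 then 2 else 1 := by
  split_ifs with hxy hfst
  · simp [hxy]
  · obtain ⟨j, hj⟩ := exists_ne x.1
    have hcommon : (⟨j, Classical.arbitrary (V j)⟩ : Σ i, V i) ∈
        (completeMultipartiteGraph V).commonNeighbors x y := by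
      simp only [mem_commonNeighbors, comap_adj, top_adj]
      exact ⟨hj.symm, hfst ▸ hj.symm⟩
    rw [SimpleGraph.dist, edist_eq_two_iff.mpr ⟨hxy, fun h : x.1 ≠ y.1 => h hfst, _, hcommon⟩]
    rfl
  · exact dist_eq_one_iff_adj.mpr hfst

variable [Nontrivial ι] [∀ i, Nonempty (V i)] {W : Set (Σ i, V i)}

lemma exists_mem_dist_ne_of_nontrivial (hW : Wᶜ.InjOn Sigma.fst) {x y : Σ i, V i} (hx : x ∉ W)
    (hxy : x.1 ≠ y.1) (hV : Nontrivial (V x.1)) :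
    ∃ z ∈ W, (completeMultipartiteGraph V).dist x z ≠ (completeMultipartiteGraph V).dist y z := by
  classical
  obtain ⟨v, hv⟩ := exists_ne x.2
  have hxz : x ≠ ⟨x.1, v⟩ := fun h => hv (eq_of_heq (Sigma.ext_iff.mp h).2).symm
  have hyz : y ≠ ⟨x.1, v⟩ := fun h => hxy (congrArg Sigma.fst h).symm
  refine ⟨⟨x.1, v⟩, by_contra fun hz => hxz (hW hx hz rfl), ?_⟩
  simp [dist_eq, hxz, hyz, hxy.symm]

theorem isResolving_iff :
    IsResolving (completeMultipartiteGraph V) W ↔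
      Wᶜ.InjOn Sigma.fst ∧ (Sigma.fst '' Wᶜ ∩ {i | Subsingleton (V i)}).Subsingleton := by
  classical
  refine ⟨fun hW => ⟨?_, ?_⟩, fun ⟨hinj, hsub⟩ x y hxy => ?_⟩
  · intro x hx y hy hfst
    by_contra hxy
    obtain ⟨z, hz, hd⟩ := hW x y hxy
    have hxz : x ≠ z := fun h => hx (h ▸ hz)
    have hyz : y ≠ z := fun h => hy (h ▸ hz)
    simp [dist_eq, hxz, hyz, hfst] at hd
  · rintro _ ⟨⟨x, hx, rfl⟩, hxs⟩ _ ⟨⟨y, hy, rfl⟩, hys⟩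
    by_contra hfst
    obtain ⟨z, hz, hd⟩ := hW x y fun h => hfst (congrArg Sigma.fst h)
    have hxz : x ≠ z := fun h => hx (h ▸ hz)
    have hyz : y ≠ z := fun h => hy (h ▸ hz)
    simp [dist_eq, hxz, hyz, Sigma.fst_ne_of_ne_of_subsingleton hxz hxs,
      Sigma.fst_ne_of_ne_of_subsingleton hyz hys] at hd
  · by_cases hxW : x ∈ W
    · refine ⟨x, hxW, ?_⟩
      rw [dist_eq, dist_eq, if_pos rfl, if_neg hxy.symm]
      split_ifs <;> decide
    by_cases hyW : y ∈ W
    · refine ⟨y, hyW, ?_⟩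
      rw [dist_eq, dist_eq, if_pos rfl, if_neg hxy]
      split_ifs <;> decide
    have hfst : x.1 ≠ y.1 := fun h => hxy (hinj hxW hyW h)
    rcases subsingleton_or_nontrivial (V x.1) with hx | hx
    · rcases subsingleton_or_nontrivial (V y.1) with hy | hy
      · exact absurd (hsub ⟨⟨x, hxW, rfl⟩, hx⟩ ⟨⟨y, hyW, rfl⟩, hy⟩) hfst
      · obtain ⟨z, hz, hd⟩ := exists_mem_dist_ne_of_nontrivial hinj hyW hfst.symm hy
        exact ⟨z, hz, hd.symm⟩
    · exact exists_mem_dist_ne_of_nontrivial hinj hxW hfst hx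

theorem metricDim_add_eq_card [Finite ι] [∀ i, Finite (V i)] :
    metricDim (completeMultipartiteGraph V) +
        ({i | Subsingleton (V i)}ᶜ.ncard + min 1 {i | Subsingleton (V i)}.ncard) =
      Nat.card (Σ i, V i) := by
  obtain ⟨I, hIS, hI⟩ := Set.exists_inter_subsingleton_ncard_eq {i | Subsingleton (V i)}
  let σ : ι → Σ i, V i := fun i => ⟨i, Classical.arbitrary _⟩
  have hσ : σ.Injective := fun i j h => congrArg Sigma.fst h
  have hres : IsResolving (completeMultipartiteGraph V) (σ '' I)ᶜ := by
    rw [isResolving_iff, compl_compl, Set.image_image]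
    exact ⟨Set.InjOn.image_of_comp (f := σ) (Set.injOn_id I), by rwa [Set.image_id']⟩
  have hcard := Set.ncard_add_ncard_compl (σ '' I)
  rw [Set.ncard_image_of_injective I hσ] at hcard
  rw [hres.metricDim_eq_ncard fun W hW => ?_]
  · omega
  obtain ⟨hinj, hsub⟩ := isResolving_iff.mp hW
  have hle := Set.ncard_le_of_inter_subsingleton hsub
  rw [hinj.ncard_image] at hle
  have := Set.ncard_add_ncard_compl W
  omega

end completeMultipartiteGraph

/-- Metric dimension of the complete multipartite graph `K_{a_1,…,a_k}` with
`k ≥ 2` nonempty parts: it equals `n - k` if no part is a singleton, and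
`n + s - k - 1` if `s ≥ 1` parts are singletons, where `n = a_1 + ⋯ + a_k`. -/
theorem metricDim_completeMultipartite (k : ℕ) (hk : 2 ≤ k)
    (a : Fin k → ℕ) (ha : ∀ i, 1 ≤ a i) :
    metricDim (completeMultipartiteGraph (fun i : Fin k => Fin (a i))) =
      if (Finset.univ.filter (fun i => a i = 1)).card = 0 then
        (∑ i, a i) - k
      else
        (∑ i, a i) + (Finset.univ.filter (fun i => a i = 1)).card - k - 1 := by
  have : Nontrivial (Fin k) := Fin.nontrivial_iff_two_le.mpr hk
  have : ∀ i, Nonempty (Fin (a i)) := fun i => ⟨⟨0, ha i⟩⟩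
  have hsingleton : {i | Subsingleton (Fin (a i))} = ↑(Finset.univ.filter fun i => a i = 1) := by
    ext i
    simp only [Set.mem_ofPred_eq, Fin.subsingleton_iff_le_one, Finset.coe_filter,
      Finset.mem_univ, true_and]
    have := ha i
    omega
  have hdim := completeMultipartiteGraph.metricDim_add_eq_card (V := fun i => Fin (a i))
  have hparts := Set.ncard_add_ncard_compl {i | Subsingleton (Fin (a i))}
  rw [hsingleton, Set.ncard_coe_finset] at hdim hparts
  simp only [Nat.card_eq_fintype_card, Fintype.card_sigma, Fintype.card_fin] at hdim hparts
  split_ifs <;> omega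
end
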